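/- Let k be a field of characteristic p > 0 and let V = span_k{1, β + β², β^{2p+1}} + (β^{6p+1}) ⊆ k[β]. Then every k-derivation of the algebra A = T / I(6p+1; 6p+1, 6p+1; V) is inner, i.e. HH¹(A) = 0. -/

import Mathlib

open Polynomial Matrix

noncomputable section

/-- `Algebra` structure on the quotient of a `k`-algebra by a ring congruence. -/
instance RingConQuotient.algebra (k R : Type*) [CommSemiring k] [Ring R] [Algebra k R]
    (c : RingCon R) : Algebra k c.Quotient where
  algebraMap := (RingCon.mk' c).comp (algebraMap k R)
  commutes' := by
    intro r x
    induction x using Quotient.ind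
    exact congrArg _ (Algebra.commutes r _)
  smul_def' := by
    intro r x
    induction x using Quotient.ind
    exact congrArg _ (Algebra.smul_def r _)

variable (k : Type*) [Field k]

/-- `D` is a `k`-derivation (as a linear endomorphism of a `k`-algebra). -/
def IsDer {R : Type*} [Ring R] [Algebra k R] (D : R →ₗ[k] R) : Prop :=
  ∀ x y : R, D (x * y) = D x * y + x * D y

/-- `D` is an inner derivation. -/
def IsInner {R : Type*} [Ring R] [Algebra k R] (D : R →ₗ[k] R) : Prop :=
  ∃ a : R, ∀ x : R, D x = a * x - x * a

/-- The ideal `(β^j)` of `k[β]`, as a `k`-submodule. -/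
def Bsub (j : ℕ) : Submodule k (Polynomial k) where
  carrier := {p | X ^ j ∣ p}
  zero_mem' := dvd_zero _
  add_mem' := fun h1 h2 => dvd_add h1 h2
  smul_mem' := fun c p hp => by
    simpa [Polynomial.smul_eq_C_mul] using Dvd.dvd.mul_left hp (C c)

lemma mem_Bsub {k : Type*} [Field k] {j : ℕ} {p : Polynomial k} :
    p ∈ Bsub k j ↔ X ^ j ∣ p := Iff.rfl

/-- The algebra `T`: upper triangular 3×3 matrices over `k[β]` whose
`(1,1)` and `(3,3)` entries are constants. -/
def Tsub : Subalgebra k (Matrix (Fin 3) (Fin 3) (Polynomial k)) where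
  carrier := {M | (∀ i j : Fin 3, j < i → M i j = 0) ∧
      (∃ x : k, M 0 0 = C x) ∧ (∃ z : k, M 2 2 = C z)}
  zero_mem' := ⟨fun _ _ _ => rfl, ⟨0, by simp⟩, ⟨0, by simp⟩⟩
  one_mem' := ⟨fun i j h => Matrix.one_apply_ne h.ne', ⟨1, by simp⟩, ⟨1, by simp⟩⟩
  add_mem' := by
    rintro a b ⟨hal, ⟨x, hax⟩, ⟨z, haz⟩⟩ ⟨hbl, ⟨y, hby⟩, ⟨w, hbw⟩⟩
    refine ⟨fun i j h => by simp [hal i j h, hbl i j h], ⟨x + y, by simp [hax, hby]⟩,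
      ⟨z + w, by simp [haz, hbw]⟩⟩
  mul_mem' := by
    rintro a b ⟨hal, ⟨x, hax⟩, ⟨z, haz⟩⟩ ⟨hbl, ⟨y, hby⟩, ⟨w, hbw⟩⟩
    refine ⟨fun i j h => ?_, ⟨x * y, ?_⟩, ⟨z * w, ?_⟩⟩
    · rw [Matrix.mul_apply]
      apply Finset.sum_eq_zero
      intro l _
      rcases lt_or_ge l i with hl | hl
      · rw [hal i l hl, zero_mul]
      · rw [hbl l j (lt_of_lt_of_le h hl), mul_zero]
    · rw [Matrix.mul_apply, Fin.sum_univ_three,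
        hbl 1 0 (by decide), hbl 2 0 (by decide), hax, hby]
      simp
    · rw [Matrix.mul_apply, Fin.sum_univ_three,
        hal 2 0 (by decide), hal 2 1 (by decide), haz, hbw]
      simp
  algebraMap_mem' := by
    intro r
    refine ⟨fun i j h => ?_, ⟨r, ?_⟩, ⟨r, ?_⟩⟩
    · rw [Matrix.algebraMap_matrix_apply, if_neg h.ne']
    · rw [Matrix.algebraMap_matrix_apply, if_pos rfl]; rfl
    · rw [Matrix.algebraMap_matrix_apply, if_pos rfl]; rfl

/-- The matrix `p·E₁₂` as an element of `T`. -/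
def tE12 (p : Polynomial k) : Tsub k :=
  ⟨Matrix.single 0 1 p, by
    refine ⟨fun i j h => ?_, ⟨0, ?_⟩, ⟨0, ?_⟩⟩
    · fin_cases i <;> fin_cases j <;> simp_all [Matrix.single, Matrix.of_apply]
    · simp [Matrix.single, Matrix.of_apply]
    · simp [Matrix.single, Matrix.of_apply]⟩

/-- The matrix `p·E₂₂` as an element of `T`. -/
def tE22 (p : Polynomial k) : Tsub k :=
  ⟨Matrix.single 1 1 p, by
    refine ⟨fun i j h => ?_, ⟨0, ?_⟩, ⟨0, ?_⟩⟩
    · fin_cases i <;> fin_cases j <;> simp_all [Matrix.single, Matrix.of_apply]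
    · simp [Matrix.single, Matrix.of_apply]
    · simp [Matrix.single, Matrix.of_apply]⟩

/-- The matrix `p·E₂₃` as an element of `T`. -/
def tE23 (p : Polynomial k) : Tsub k :=
  ⟨Matrix.single 1 2 p, by
    refine ⟨fun i j h => ?_, ⟨0, ?_⟩, ⟨0, ?_⟩⟩
    · fin_cases i <;> fin_cases j <;> simp_all [Matrix.single, Matrix.of_apply]
    · simp [Matrix.single, Matrix.of_apply]
    · simp [Matrix.single, Matrix.of_apply]⟩

/-- The matrix `p·E₁₃` as an element of `T`. -/
def tE13 (p : Polynomial k) : Tsub k :=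
  ⟨Matrix.single 0 2 p, by
    refine ⟨fun i j h => ?_, ⟨0, ?_⟩, ⟨0, ?_⟩⟩
    · fin_cases i <;> fin_cases j <;> simp_all [Matrix.single, Matrix.of_apply]
    · simp [Matrix.single, Matrix.of_apply]
    · simp [Matrix.single, Matrix.of_apply]⟩

/-- The idempotent `E₁₁` as an element of `T`. -/
def tE11 : Tsub k :=
  ⟨Matrix.single 0 0 1, by
    refine ⟨fun i j h => ?_, ⟨1, ?_⟩, ⟨0, ?_⟩⟩
    · fin_cases i <;> fin_cases j <;> simp_all [Matrix.single, Matrix.of_apply]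
    · simp [Matrix.single, Matrix.of_apply]
    · simp [Matrix.single, Matrix.of_apply]⟩

/-- The idempotent `E₂₂` as an element of `T`. -/
def tE22one : Tsub k := tE22 k 1

/-- The idempotent `E₃₃` as an element of `T`. -/
def tE33 : Tsub k :=
  ⟨Matrix.single 2 2 1, by
    refine ⟨fun i j h => ?_, ⟨0, ?_⟩, ⟨1, ?_⟩⟩
    · fin_cases i <;> fin_cases j <;> simp_all [Matrix.single, Matrix.of_apply]
    · simp [Matrix.single, Matrix.of_apply]
    · simp [Matrix.single, Matrix.of_apply]⟩

/-- The underlying set of the ideal `I(n; n', n''; V)` of `T`. -/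
def Icar (n n' n'' : ℕ) (V : Submodule k (Polynomial k)) : Set (Tsub k) :=
  {M | (M : Matrix (Fin 3) (Fin 3) (Polynomial k)) 0 0 = 0 ∧
       (M : Matrix (Fin 3) (Fin 3) (Polynomial k)) 2 2 = 0 ∧
       X ^ n' ∣ (M : Matrix (Fin 3) (Fin 3) (Polynomial k)) 0 1 ∧
       (M : Matrix (Fin 3) (Fin 3) (Polynomial k)) 0 2 ∈ V ∧
       X ^ n ∣ (M : Matrix (Fin 3) (Fin 3) (Polynomial k)) 1 1 ∧
       X ^ n'' ∣ (M : Matrix (Fin 3) (Fin 3) (Polynomial k)) 1 2}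

variable {k}

lemma Tsub_lower {a : Tsub k} :
    ∀ i j : Fin 3, j < i → (a : Matrix (Fin 3) (Fin 3) (Polynomial k)) i j = 0 := a.2.1

lemma Tsub_00 (a : Tsub k) : ∃ x : k, (a : Matrix (Fin 3) (Fin 3) (Polynomial k)) 0 0 = C x :=
  a.2.2.1

lemma Tsub_22 (a : Tsub k) : ∃ z : k, (a : Matrix (Fin 3) (Fin 3) (Polynomial k)) 2 2 = C z :=
  a.2.2.2

variable (k)

/-- The two-sided ideal `I(n; n', n''; V)` of `T`. -/
def Itsi (n n' n'' : ℕ) (V : Submodule k (Polynomial k)) (hn' : n' ≤ n) (hn'' : n'' ≤ n)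
    (hV : ∀ p : Polynomial k, X ^ min n' n'' ∣ p → p ∈ V) : TwoSidedIdeal (Tsub k) :=
  TwoSidedIdeal.mk' (Icar k n n' n'' V)
    (by
      refine ⟨rfl, rfl, ?_, ?_, ?_, ?_⟩ <;> simp)
    (by
      rintro a b ⟨h1, h2, h3, h4, h5, h6⟩ ⟨g1, g2, g3, g4, g5, g6⟩
      refine ⟨?_, ?_, ?_, ?_, ?_, ?_⟩ <;>
        simp only [AddMemClass.coe_add, Matrix.add_apply]
      · rw [h1, g1, add_zero]
      · rw [h2, g2, add_zero]
      · exact dvd_add h3 g3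
      · exact V.add_mem h4 g4
      · exact dvd_add h5 g5
      · exact dvd_add h6 g6)
    (by
      rintro a ⟨h1, h2, h3, h4, h5, h6⟩
      refine ⟨?_, ?_, ?_, ?_, ?_, ?_⟩ <;>
        simp only [NegMemClass.coe_neg, Matrix.neg_apply]
      · rw [h1, neg_zero]
      · rw [h2, neg_zero]
      · exact dvd_neg.mpr h3
      · exact V.neg_mem h4
      · exact dvd_neg.mpr h5
      · exact dvd_neg.mpr h6)
    (by
      rintro t a ⟨h1, h2, h3, h4, h5, h6⟩
      have hta : ((t * a : Tsub k) : Matrix (Fin 3) (Fin 3) (Polynomial k)) =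
          (t : Matrix (Fin 3) (Fin 3) (Polynomial k)) * a := rfl
      obtain ⟨x, hx⟩ := Tsub_00 t
      refine ⟨?_, ?_, ?_, ?_, ?_, ?_⟩ <;>
        rw [hta, Matrix.mul_apply, Fin.sum_univ_three]
      · rw [h1, Tsub_lower (a := a) 1 0 (by decide), Tsub_lower (a := a) 2 0 (by decide)]
        simp
      · rw [h2, Tsub_lower (a := t) 2 0 (by decide), Tsub_lower (a := t) 2 1 (by decide)]
        simp
      · rw [Tsub_lower (a := a) 2 1 (by decide)]
        simp only [mul_zero, add_zero]
        exact dvd_add (Dvd.dvd.mul_left h3 _)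
          (Dvd.dvd.mul_left ((pow_dvd_pow X hn').trans h5) _)
      · rw [h2]
        simp only [mul_zero, add_zero]
        refine V.add_mem ?_
          (hV _ (Dvd.dvd.mul_left ((pow_dvd_pow X (min_le_right n' n'')).trans h6) _))
        rw [hx]
        have : C x * (a : Matrix (Fin 3) (Fin 3) (Polynomial k)) 0 2 =
            x • (a : Matrix (Fin 3) (Fin 3) (Polynomial k)) 0 2 := by
          rw [Polynomial.smul_eq_C_mul]
        rw [this]
        exact V.smul_mem _ h4
      · rw [Tsub_lower (a := t) 1 0 (by decide), Tsub_lower (a := a) 2 1 (by decide)]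
        simp only [zero_mul, mul_zero, zero_add, add_zero]
        exact Dvd.dvd.mul_left h5 _
      · rw [Tsub_lower (a := t) 1 0 (by decide), h2]
        simp only [zero_mul, mul_zero, zero_add, add_zero]
        exact Dvd.dvd.mul_left h6 _)
    (by
      rintro a t ⟨h1, h2, h3, h4, h5, h6⟩
      have hta : ((a * t : Tsub k) : Matrix (Fin 3) (Fin 3) (Polynomial k)) =
          (a : Matrix (Fin 3) (Fin 3) (Polynomial k)) * t := rfl
      obtain ⟨z, hz⟩ := Tsub_22 t
      refine ⟨?_, ?_, ?_, ?_, ?_, ?_⟩ <;>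
        rw [hta, Matrix.mul_apply, Fin.sum_univ_three]
      · rw [h1, Tsub_lower (a := t) 1 0 (by decide), Tsub_lower (a := t) 2 0 (by decide)]
        simp
      · rw [h2, Tsub_lower (a := a) 2 0 (by decide), Tsub_lower (a := a) 2 1 (by decide)]
        simp
      · rw [h1, Tsub_lower (a := t) 2 1 (by decide)]
        simp only [zero_mul, mul_zero, zero_add, add_zero]
        exact Dvd.dvd.mul_right h3 _
      · rw [h1]
        simp only [zero_mul, zero_add]
        refine V.add_mem
          (hV _ (Dvd.dvd.mul_right ((pow_dvd_pow X (min_le_left n' n'')).trans h3) _)) ?_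
        rw [hz]
        have : (a : Matrix (Fin 3) (Fin 3) (Polynomial k)) 0 2 * C z =
            z • (a : Matrix (Fin 3) (Fin 3) (Polynomial k)) 0 2 := by
          rw [Polynomial.smul_eq_C_mul, mul_comm]
        rw [this]
        exact V.smul_mem _ h4
      · rw [Tsub_lower (a := a) 1 0 (by decide), Tsub_lower (a := t) 2 1 (by decide)]
        simp only [zero_mul, mul_zero, zero_add, add_zero]
        exact Dvd.dvd.mul_right h5 _
      · rw [Tsub_lower (a := a) 1 0 (by decide)]
        simp only [zero_mul, zero_add]
        exact dvd_add (Dvd.dvd.mul_right ((pow_dvd_pow X hn'').trans h5) _)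
          (Dvd.dvd.mul_right h6 _))

/-- The quotient algebra `A = T / I(n; n', n''; V)`. -/
def Aquot (n n' n'' : ℕ) (V : Submodule k (Polynomial k)) (hn' : n' ≤ n) (hn'' : n'' ≤ n)
    (hV : ∀ p : Polynomial k, X ^ min n' n'' ∣ p → p ∈ V) : Type _ :=
  (Itsi k n n' n'' V hn' hn'' hV).ringCon.Quotient

instance (n n' n'' : ℕ) (V : Submodule k (Polynomial k)) (hn' : n' ≤ n) (hn'' : n'' ≤ n)
    (hV : ∀ p : Polynomial k, X ^ min n' n'' ∣ p → p ∈ V) :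
    Ring (Aquot k n n' n'' V hn' hn'' hV) :=
  inferInstanceAs (Ring (Itsi k n n' n'' V hn' hn'' hV).ringCon.Quotient)

instance (n n' n'' : ℕ) (V : Submodule k (Polynomial k)) (hn' : n' ≤ n) (hn'' : n'' ≤ n)
    (hV : ∀ p : Polynomial k, X ^ min n' n'' ∣ p → p ∈ V) :
    Algebra k (Aquot k n n' n'' V hn' hn'' hV) :=
  inferInstanceAs (Algebra k (Itsi k n n' n'' V hn' hn'' hV).ringCon.Quotient)

/-- The quotient map `T → A`. -/
def Amk (n n' n'' : ℕ) (V : Submodule k (Polynomial k)) (hn' : n' ≤ n) (hn'' : n'' ≤ n)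
    (hV : ∀ p : Polynomial k, X ^ min n' n'' ∣ p → p ∈ V) :
    Tsub k →+* Aquot k n n' n'' V hn' hn'' hV :=
  RingCon.mk' (Itsi k n n' n'' V hn' hn'' hV).ringCon


/-- The subspace `V = span{1, β + β², β^{2p+1}} + (β^{6p+1})` of `k[β]`. -/
def V19 (p : ℕ) : Submodule k (Polynomial k) :=
  Submodule.span k {(1 : Polynomial k), X + X ^ 2, X ^ (2 * p + 1)} ⊔ Bsub k (6 * p + 1)

lemma hV19 (p : ℕ) :
    ∀ q : Polynomial k, X ^ min (6 * p + 1) (6 * p + 1) ∣ q → q ∈ V19 k p := by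
  intro q hq
  rw [min_self] at hq
  exact Submodule.mem_sup_right hq


/-!
Modulo inner derivations, a derivation `D` of `A` kills `E₁₁, E₂₂, E₃₃` and `α`, and sends
`β ↦ f·E₂₂` and `γ ↦ h·E₂₃` with `h(0) = 0`; on the corner `k[β]/(β^n)` it is then
`g ↦ g′f`. Since `E₁₃ g = α (g E₂₂) γ` vanishes exactly when `g ∈ V`, this forces
`g′f + gh ∈ V` for all `g ∈ V`, and `D` is inner as soon as that condition forces
`β^n ∣ f` and `β^{n″} ∣ h`. For the given `V` in characteristic `p`, the elements
`1, β + β², β^{2p+1}, β^{6p+1}` (with derivatives `0, 1 + 2β, β^{2p}, β^{6p}`) give linear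
recurrences between the coefficients of `f` and `h` that kill all of them below degree `6p + 1`;
the step that kills the coefficient of `h` in degree `2p + 1` needs `p ≥ 2`.
-/

section Derivation

variable {R : Type*} [Ring R] [Algebra k R]

def innerDer (a : R) : R →ₗ[k] R :=
  LinearMap.mulLeft k a - LinearMap.mulRight k a

variable {k}

@[simp]
lemma innerDer_apply (a x : R) : innerDer k a x = a * x - x * a := rfl

lemma isDer_innerDer (a : R) : IsDer k (innerDer k a) := by
  intro x y
  simp only [innerDer_apply]
  noncomm_ring

lemma IsDer.sub {D D' : R →ₗ[k] R} (hD : IsDer k D) (hD' : IsDer k D') : IsDer k (D - D') := by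
  intro x y
  simp only [LinearMap.sub_apply, hD x y, hD' x y]
  noncomm_ring

lemma sub_innerDer_sub_innerDer (D : R →ₗ[k] R) (a b : R) :
    D - innerDer k a - innerDer k b = D - innerDer k (a + b) := by
  ext x
  simp only [LinearMap.sub_apply, innerDer_apply]
  noncomm_ring

lemma IsInner.of_sub_innerDer_eq_zero {D : R →ₗ[k] R} {a : R} (h : D - innerDer k a = 0) :
    IsInner k D :=
  ⟨a, fun x => sub_eq_zero.mp (LinearMap.congr_fun h x)⟩

variable {D : R →ₗ[k] R}

lemma IsDer.sub_innerDer_sum_apply_eq_zero {ι : Type*} [Fintype ι] {e : ι → R}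
    (he : CompleteOrthogonalIdempotents e) (hD : IsDer k D) (i : ι) :
    (D - innerDer k (∑ j, D (e j) * e j)) (e i) = 0 := by
  classical
  have hright : (∑ j, D (e j) * e j) * e i = D (e i) * e i := by
    simp [Finset.sum_mul, mul_assoc, he.mul_eq]
  have hterm : ∀ j, e i * (D (e j) * e j) = D (e i * e j) * e j - D (e i) * e j := by
    intro j
    rw [hD, add_mul, mul_assoc (D (e i)), (he.idem j).eq, mul_assoc (e i)]
    abel
  have hleft : e i * ∑ j, D (e j) * e j = D (e i) * e i - D (e i) := by
    rw [Finset.mul_sum, Finset.sum_congr rfl fun j _ => hterm j, Finset.sum_sub_distrib,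
      ← Finset.mul_sum, he.complete, mul_one]
    simp [he.mul_eq, apply_ite D]
  rw [LinearMap.sub_apply, innerDer_apply, hright, hleft]
  abel

lemma IsDer.apply_eq_mul_apply_mul (hD : IsDer k D) {e f x : R} (he : D e = 0) (hf : D f = 0)
    (hex : e * x = x) (hxf : x * f = x) : D x = e * D x * f := by
  have hl : D x = e * D x := by simpa [he, hex] using hD e x
  have hr : D x = D x * f := by simpa [hf, hxf] using hD x f
  rw [mul_assoc, ← hr, ← hl]

lemma IsDer.apply_eq_derivative_mul (hD : IsDer k D) (ψ : k[X] →ₗ[k] R)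
    (hψ : ∀ g h, ψ (g * h) = ψ g * ψ h) {f : k[X]} (h1 : D (ψ 1) = 0) (hX : D (ψ X) = ψ f)
    (g : k[X]) : D (ψ g) = ψ (derivative g * f) := by
  have hpow : ∀ m : ℕ, D (ψ (X ^ m)) = ψ (derivative (X ^ m) * f) := by
    intro m
    induction m with
    | zero => simpa using h1
    | succ m ih =>
      rw [pow_succ, hψ, hD, ih, hX, ← hψ, ← hψ, ← map_add]
      congr 1
      rw [derivative_mul, derivative_X]
      ring
  induction g using Polynomial.induction_on' with
  | add g h hg hh => rw [map_add, map_add, hg, hh, derivative_add, add_mul, map_add]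
  | monomial m c =>
    rw [← C_mul_X_pow_eq_monomial, ← smul_eq_C_mul, map_smul, map_smul, hpow, derivative_smul,
      smul_mul_assoc, map_smul]

end Derivation

lemma Matrix.completeOrthogonalIdempotents_single_one {ι α : Type*} [Fintype ι] [DecidableEq ι]
    [Semiring α] : CompleteOrthogonalIdempotents fun i : ι => Matrix.single i i (1 : α) :=
  CompleteOrthogonalIdempotents.iff_ortho_complete.mpr
    ⟨fun _ _ hij => by simp [hij], Matrix.sum_single_one⟩

section MatrixUnits

variable {k}

@[simp] lemma coe_tE11 : (tE11 k : Matrix (Fin 3) (Fin 3) k[X]) = Matrix.single 0 0 1 := rfl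
@[simp] lemma coe_tE33 : (tE33 k : Matrix (Fin 3) (Fin 3) k[X]) = Matrix.single 2 2 1 := rfl

variable (q : k[X])

@[simp] lemma coe_tE12 : (tE12 k q : Matrix (Fin 3) (Fin 3) k[X]) = Matrix.single 0 1 q := rfl
@[simp] lemma coe_tE13 : (tE13 k q : Matrix (Fin 3) (Fin 3) k[X]) = Matrix.single 0 2 q := rfl
@[simp] lemma coe_tE22 : (tE22 k q : Matrix (Fin 3) (Fin 3) k[X]) = Matrix.single 1 1 q := rfl
@[simp] lemma coe_tE23 : (tE23 k q : Matrix (Fin 3) (Fin 3) k[X]) = Matrix.single 1 2 q := rfl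

lemma completeOrthogonalIdempotents_tE :
    CompleteOrthogonalIdempotents ![tE11 k, tE22 k 1, tE33 k] := by
  refine (CompleteOrthogonalIdempotents.map_injective_iff (Tsub k).val.toRingHom
    Subtype.val_injective).mp ?_
  convert Matrix.completeOrthogonalIdempotents_single_one (ι := Fin 3) (α := k[X]) using 1
  ext i : 1
  fin_cases i <;> rfl

lemma tE11_mul_mul_tE22 (t : Tsub k) : tE11 k * t * tE22 k 1 = tE12 k (t.1 0 1) :=
  Subtype.ext (by simp)

lemma tE22_mul_mul_tE22 (t : Tsub k) : tE22 k 1 * t * tE22 k 1 = tE22 k (t.1 1 1) :=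
  Subtype.ext (by simp)

lemma tE22_mul_mul_tE33 (t : Tsub k) : tE22 k 1 * t * tE33 k = tE23 k (t.1 1 2) :=
  Subtype.ext (by simp)

lemma eq_tE_sum (t : Tsub k) : ∃ x z : k,
    t = x • tE11 k + tE12 k (t.1 0 1) + tE13 k (t.1 0 2) + tE22 k (t.1 1 1)
      + tE23 k (t.1 1 2) + z • tE33 k := by
  obtain ⟨x, hx⟩ := Tsub_00 t
  obtain ⟨z, hz⟩ := Tsub_22 t
  refine ⟨x, z, Subtype.ext ?_⟩
  ext i j
  fin_cases i <;> fin_cases j <;>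
    simp [Matrix.single, hx, hz, Tsub_lower, Polynomial.smul_eq_C_mul]

end MatrixUnits

section QuotientAlgebra

variable {k} {n n' n'' : ℕ} {V : Submodule k k[X]} {hn' : n' ≤ n} {hn'' : n'' ≤ n}
  {hV : ∀ p : k[X], X ^ min n' n'' ∣ p → p ∈ V}

local notation "π" => Amk k n n' n'' V hn' hn'' hV

lemma Amk_surjective : Function.Surjective π :=
  fun y => Quotient.inductionOn' y fun t => ⟨t, rfl⟩

lemma Amk_smul (r : k) (t : Tsub k) : π (r • t) = r • π t := by
  rw [Algebra.smul_def, Algebra.smul_def, map_mul]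
  rfl

lemma Amk_eq_zero_iff (t : Tsub k) : π t = 0 ↔ t ∈ Icar k n n' n'' V := by
  rw [← map_zero π]
  refine (RingCon.eq _).trans ?_
  rw [TwoSidedIdeal.rel_iff, sub_zero]
  exact TwoSidedIdeal.mem_mk' _ _ _ _ _ _ _

lemma Amk_tE13_eq_zero_iff (q : k[X]) : π (tE13 k q) = 0 ↔ q ∈ V := by
  simp [Amk_eq_zero_iff, Icar, Matrix.single]

lemma Amk_tE22_eq_zero_iff (q : k[X]) : π (tE22 k q) = 0 ↔ X ^ n ∣ q := by
  simp [Amk_eq_zero_iff, Icar, Matrix.single]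

lemma Amk_tE23_eq_zero_iff (q : k[X]) : π (tE23 k q) = 0 ↔ X ^ n'' ∣ q := by
  simp [Amk_eq_zero_iff, Icar, Matrix.single]

end QuotientAlgebra

section NormalForm

variable {k} {n n' n'' : ℕ} {V : Submodule k k[X]} {hn' : n' ≤ n} {hn'' : n'' ≤ n}
  {hV : ∀ p : k[X], X ^ min n' n'' ∣ p → p ∈ V}

local notation "A" => Aquot k n n' n'' V hn' hn'' hV
local notation "π" => Amk k n n' n'' V hn' hn'' hV

lemma Amk_congr {t t' : Tsub k} (h : (t : Matrix (Fin 3) (Fin 3) k[X]) = t') : π t = π t' :=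
  congrArg _ (Subtype.ext h)

lemma Amk_tE12_eq_mul (g : k[X]) : π (tE12 k g) = π (tE12 k 1) * π (tE22 k g) := by
  rw [← map_mul]; exact Amk_congr (by simp)

lemma Amk_tE13_eq_mul (g : k[X]) : π (tE13 k g) = π (tE12 k 1) * π (tE23 k g) := by
  rw [← map_mul]; exact Amk_congr (by simp)

lemma Amk_tE23_eq_mul (g : k[X]) : π (tE23 k g) = π (tE22 k g) * π (tE23 k 1) := by
  rw [← map_mul]; exact Amk_congr (by simp)

lemma completeOrthogonalIdempotents_Amk_tE :
    CompleteOrthogonalIdempotents ![π (tE11 k), π (tE22 k 1), π (tE33 k)] := by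
  convert completeOrthogonalIdempotents_tE.map π using 1
  ext i : 1
  fin_cases i <;> rfl

variable {D : Aquot k n n' n'' V hn' hn'' hV →ₗ[k] Aquot k n n' n'' V hn' hn'' hV}

lemma IsDer.exists_sub_innerDer_apply_tE_eq_zero (hD : IsDer k D) : ∃ a : A,
    (D - innerDer k a) (π (tE11 k)) = 0 ∧ (D - innerDer k a) (π (tE22 k 1)) = 0 ∧
      (D - innerDer k a) (π (tE33 k)) = 0 :=
  ⟨_, hD.sub_innerDer_sum_apply_eq_zero completeOrthogonalIdempotents_Amk_tE 0,
    hD.sub_innerDer_sum_apply_eq_zero completeOrthogonalIdempotents_Amk_tE 1,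
    hD.sub_innerDer_sum_apply_eq_zero completeOrthogonalIdempotents_Amk_tE 2⟩

lemma IsDer.exists_apply_Amk_eq_Amk_mul_mul (hD : IsDer k D) {e e' x : Tsub k}
    (he : D (π e) = 0) (he' : D (π e') = 0) (hex : e * x = x) (hxe' : x * e' = x) :
    ∃ t, D (π x) = π (e * t * e') := by
  obtain ⟨t, ht⟩ := Amk_surjective (D (π x))
  refine ⟨t, ?_⟩
  rw [hD.apply_eq_mul_apply_mul he he' (by rw [← map_mul, hex]) (by rw [← map_mul, hxe']), ← ht,
    map_mul, map_mul]

structure IsNormalizedDer (D : A →ₗ[k] A) (f h : k[X]) : Prop where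
  isDer : IsDer k D
  apply_tE11 : D (π (tE11 k)) = 0
  apply_tE22_one : D (π (tE22 k 1)) = 0
  apply_tE33 : D (π (tE33 k)) = 0
  apply_tE12_one : D (π (tE12 k 1)) = 0
  apply_tE22_X : D (π (tE22 k X)) = π (tE22 k f)
  apply_tE23_one : D (π (tE23 k 1)) = π (tE23 k h)

/-- Subtracting the inner derivation of `-a·E₂₂ + z·E₃₃` removes `D α = a·E₁₂`, and `z` is
chosen to kill the constant term of the coefficient of `D γ`. -/
lemma exists_isNormalizedDer_sub_innerDer (hD : IsDer k D) (h₁ : D (π (tE11 k)) = 0)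
    (h₂ : D (π (tE22 k 1)) = 0) (h₃ : D (π (tE33 k)) = 0) :
    ∃ (m : A) (f h : k[X]), h.coeff 0 = 0 ∧ IsNormalizedDer (D - innerDer k m) f h := by
  obtain ⟨tα, hα⟩ := hD.exists_apply_Amk_eq_Amk_mul_mul (x := tE12 k 1) h₁ h₂
    (Subtype.ext (by simp)) (Subtype.ext (by simp))
  obtain ⟨tβ, hβ⟩ := hD.exists_apply_Amk_eq_Amk_mul_mul (x := tE22 k X) h₂ h₂
    (Subtype.ext (by simp)) (Subtype.ext (by simp))
  obtain ⟨tγ, hγ⟩ := hD.exists_apply_Amk_eq_Amk_mul_mul (x := tE23 k 1) h₂ h₃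
    (Subtype.ext (by simp)) (Subtype.ext (by simp))
  rw [tE11_mul_mul_tE22] at hα
  rw [tE22_mul_mul_tE22] at hβ
  rw [tE22_mul_mul_tE33] at hγ
  set a := tα.1 0 1
  set c := tγ.1 1 2
  set z := -(c + a).coeff 0
  set m := tE22 k (-a) + z • tE33 k
  have hinner (t : Tsub k) : innerDer k (π m) (π t) = π (m * t - t * m) := by
    simp
  have hcomm₁ : m * tE11 k - tE11 k * m = 0 := Subtype.ext (by simp [m, add_mul, mul_add])
  have hcomm₂ : m * tE22 k 1 - tE22 k 1 * m = 0 := Subtype.ext (by simp [m, add_mul, mul_add])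
  have hcomm₃ : m * tE33 k - tE33 k * m = 0 := Subtype.ext (by simp [m, add_mul, mul_add])
  have hcommα : m * tE12 k 1 - tE12 k 1 * m = tE12 k a :=
    Subtype.ext (by simp [m, add_mul, mul_add, Matrix.single_neg])
  have hcommβ : m * tE22 k X - tE22 k X * m = 0 :=
    Subtype.ext (by simp [m, add_mul, mul_add, mul_comm X])
  have hcommγ : m * tE23 k 1 - tE23 k 1 * m = tE23 k (-a - C z) :=
    Subtype.ext (by simp [m, add_mul, mul_add, smul_eq_C_mul, sub_eq_add_neg, Matrix.single_add,
      Matrix.single_neg])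
  refine ⟨π m, tβ.1 1 1, c + a + C z, by simp [z], hD.sub (isDer_innerDer _),
    ?_, ?_, ?_, ?_, ?_, ?_⟩
    <;> simp only [LinearMap.sub_apply, hinner, h₁, h₂, h₃, hα, hβ, hγ, hcomm₁, hcomm₂, hcomm₃,
      hcommα, hcommβ, hcommγ, map_zero, sub_zero, sub_self, ← map_sub]
  exact Amk_congr (by simp [Matrix.single_add, sub_eq_add_neg, Matrix.single_neg]; abel)

namespace IsNormalizedDer

variable {f h : k[X]}

lemma apply_tE22 (hD : IsNormalizedDer D f h) (g : k[X]) :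
    D (π (tE22 k g)) = π (tE22 k (derivative g * f)) :=
  hD.isDer.apply_eq_derivative_mul
    { toFun := fun g => π (tE22 k g)
      map_add' := fun g g' => by rw [← map_add]; exact Amk_congr (by simp [Matrix.single_add])
      map_smul' := fun c g => by rw [RingHom.id_apply, ← Amk_smul]; exact Amk_congr (by simp) }
    (fun g g' => show π (tE22 k (g * g')) = π (tE22 k g) * π (tE22 k g') by
      rw [← map_mul]; exact Amk_congr (by simp)) hD.apply_tE22_one hD.apply_tE22_X g

lemma apply_tE23 (hD : IsNormalizedDer D f h) (g : k[X]) :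
    D (π (tE23 k g)) = π (tE23 k (derivative g * f + g * h)) := by
  rw [Amk_tE23_eq_mul, hD.isDer, hD.apply_tE22, hD.apply_tE23_one, ← map_mul, ← map_mul, ← map_add]
  exact Amk_congr (by simp [Matrix.single_add])

lemma derivative_mul_add_mul_mem (hD : IsNormalizedDer D f h) {g : k[X]} (hg : g ∈ V) :
    derivative g * f + g * h ∈ V := by
  have hD13 : D (π (tE13 k g)) = π (tE13 k (derivative g * f + g * h)) := by
    rw [Amk_tE13_eq_mul, hD.isDer, hD.apply_tE12_one, zero_mul, zero_add, hD.apply_tE23,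
      ← Amk_tE13_eq_mul]
  exact (Amk_tE13_eq_zero_iff _).mp (by rw [← hD13, (Amk_tE13_eq_zero_iff g).mpr hg, map_zero])

lemma eq_zero (hD : IsNormalizedDer D f h) (hf : X ^ n ∣ f) (hh : X ^ n'' ∣ h) : D = 0 := by
  have h22 (g : k[X]) : D (π (tE22 k g)) = 0 := by
    rw [hD.apply_tE22, Amk_tE22_eq_zero_iff]
    exact dvd_mul_of_dvd_right hf _
  have h23 (g : k[X]) : D (π (tE23 k g)) = 0 := by
    rw [hD.apply_tE23, Amk_tE23_eq_zero_iff]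
    exact dvd_add ((pow_dvd_pow X hn'').trans (dvd_mul_of_dvd_right hf _))
      (dvd_mul_of_dvd_right hh _)
  have h12 (g : k[X]) : D (π (tE12 k g)) = 0 := by
    rw [Amk_tE12_eq_mul, hD.isDer, hD.apply_tE12_one, h22, zero_mul, mul_zero, add_zero]
  have h13 (g : k[X]) : D (π (tE13 k g)) = 0 := by
    rw [Amk_tE13_eq_mul, hD.isDer, hD.apply_tE12_one, h23, zero_mul, mul_zero, add_zero]
  ext x
  obtain ⟨t, rfl⟩ := Amk_surjective x
  obtain ⟨x, z, ht⟩ := eq_tE_sum t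
  rw [ht]
  simp [Amk_smul, hD.apply_tE11, hD.apply_tE33, h12, h13, h22, h23]

end IsNormalizedDer

theorem isInner_of_forall_derivative_mul_add_mul_mem
    (hVder : ∀ f h : k[X], h.coeff 0 = 0 → (∀ g ∈ V, derivative g * f + g * h ∈ V) →
      X ^ n ∣ f ∧ X ^ n'' ∣ h)
    (hD : IsDer k D) : IsInner k D := by
  obtain ⟨a, ha₁, ha₂, ha₃⟩ := hD.exists_sub_innerDer_apply_tE_eq_zero
  obtain ⟨m, f, h, h0, hN⟩ :=
    exists_isNormalizedDer_sub_innerDer (hD.sub (isDer_innerDer a)) ha₁ ha₂ ha₃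
  obtain ⟨hf, hh⟩ := hVder f h h0 fun g hg => hN.derivative_mul_add_mul_mem hg
  exact IsInner.of_sub_innerDer_eq_zero <| by
    rw [← sub_innerDer_sub_innerDer]
    exact hN.eq_zero hf hh

end NormalForm

section V19

variable {k} {p : ℕ}

lemma coeff_two_eq_coeff_one_of_mem_V19 (hp : 0 < p) {q : k[X]} (hq : q ∈ V19 k p) :
    q.coeff 2 = q.coeff 1 := by
  have hle : V19 k p ≤ LinearMap.ker (lcoeff k 2 - lcoeff k 1) := by
    refine sup_le (Submodule.span_le.mpr ?_) fun r hr => ?_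
    · rintro _ (rfl | rfl | rfl) <;> simp [coeff_one, coeff_X, coeff_X_pow, hp.ne']
    · simp [X_pow_dvd_iff.mp hr 2 (by omega), X_pow_dvd_iff.mp hr 1 (by omega)]
  simpa [sub_eq_zero] using hle hq

lemma coeff_eq_zero_of_mem_V19 {q : k[X]} (hq : q ∈ V19 k p) {j : ℕ} (hj₃ : 3 ≤ j)
    (hj : j < 6 * p + 1) (hjp : j ≠ 2 * p + 1) : q.coeff j = 0 := by
  have hle : V19 k p ≤ LinearMap.ker (lcoeff k j) := by
    refine sup_le (Submodule.span_le.mpr ?_) fun r hr => ?_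
    · rintro _ (rfl | rfl | rfl) <;>
        simp [coeff_one, coeff_X, coeff_X_pow, hjp, show j ≠ 0 by omega, show 1 ≠ j by omega,
          show j ≠ 2 by omega]
    · simp [X_pow_dvd_iff.mp hr j hj]
  simpa using hle hq

/-- The relations that the elements `1, β + β², β^{2p+1}, β^{6p+1}` of `V` impose on the
coefficients `a` of `f` and `b` of `h`. -/
lemma eq_zero_of_coeff_relations (hp : 2 ≤ p) {a b : ℕ → k} (ha₀ : a 0 = 0) (hb₀ : b 0 = 0)
    (hb₂ : b 2 = b 1) (hb : ∀ j, 3 ≤ j → j < 6 * p + 1 → j ≠ 2 * p + 1 → b j = 0)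
    (hab₂ : a 2 + 2 * a 1 + b 1 + b 0 = a 1 + 2 * a 0 + b 0)
    (hab : ∀ i, 1 ≤ i → i + 2 < 6 * p + 1 → i + 2 ≠ 2 * p + 1 →
      a (i + 2) + 2 * a (i + 1) + b (i + 1) + b i = 0)
    (hshift : ∀ i, 1 ≤ i → i + 1 ≤ 4 * p → a (i + 1) + b i = 0) {j : ℕ} (hj : j < 6 * p + 1) :
    a j = 0 ∧ b j = 0 := by
  have hb_of (i : ℕ) (hi : 1 ≤ i) (hi' : i + 2 ≤ 4 * p) (hip : i + 2 ≠ 2 * p + 1) : b i = 0 := by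
    linear_combination -(hab i hi (by omega) hip) + hshift (i + 1) (by omega) (by omega)
      + 2 * hshift i hi (by omega)
  have hb₁ : b 1 = 0 := hb_of 1 le_rfl (by omega) (by omega)
  have hb' (j : ℕ) (hj : j < 6 * p + 1) : b j = 0 := by
    rcases lt_or_ge j 3 with hj₃ | hj₃
    · interval_cases j <;> simp [hb₀, hb₁, hb₂]
    · obtain rfl | hjp := eq_or_ne j (2 * p + 1)
      · exact hb_of _ (by omega) (by omega) (by omega)
      · exact hb j hj₃ hj hjp
  have ha₁ : a 1 = 0 := by
    linear_combination hab₂ - hshift 1 le_rfl (by omega) + 2 * ha₀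
  refine ⟨?_, hb' j hj⟩
  induction j with
  | zero => exact ha₀
  | succ j ih =>
    rcases j with _ | i
    · exact ha₁
    rcases le_or_gt (i + 2) (4 * p) with hi | hi
    · linear_combination hshift (i + 1) (by omega) hi - hb' (i + 1) (by omega)
    · linear_combination hab i (by omega) hj (by omega) - 2 * ih (by omega)
        - hb' (i + 1) (by omega) - hb' i (by omega)

lemma derivative_X_pow_mul_add_one (p m : ℕ) [CharP k p] :
    derivative (X ^ (p * m + 1) : k[X]) = X ^ (p * m) := by
  simp

theorem X_pow_dvd_of_forall_derivative_mul_add_mul_mem_V19 [CharP k p] (hp : 2 ≤ p) {f h : k[X]}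
    (h₀ : h.coeff 0 = 0) (H : ∀ g ∈ V19 k p, derivative g * f + g * h ∈ V19 k p) :
    X ^ (6 * p + 1) ∣ f ∧ X ^ (6 * p + 1) ∣ h := by
  have hgen {g : k[X]} (hg : g ∈ ({1, X + X ^ 2, X ^ (2 * p + 1)} : Set k[X])) :
      derivative g * f + g * h ∈ V19 k p :=
    H g (Submodule.mem_sup_left (Submodule.subset_span hg))
  have H₁ : h ∈ V19 k p := by simpa using hgen (g := 1) (by simp)
  have H₂ := hgen (g := X + X ^ 2) (by simp)
  have H₃ := hgen (g := X ^ (p * 2 + 1)) (by simp [mul_comm p])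
  have H₄ := H (X ^ (p * 6 + 1)) (Submodule.mem_sup_right (dvd_of_eq (by ring_nf)))
  rw [derivative_X_pow_mul_add_one] at H₃ H₄
  have ha₀ : f.coeff 0 = 0 := by
    simpa [coeff_X_pow_mul', mul_comm p] using
      coeff_eq_zero_of_mem_V19 H₄ (j := 6 * p) (by omega) (by omega) (by omega)
  have c₁ : (derivative (X + X ^ 2) * f + (X + X ^ 2) * h).coeff 1 =
      f.coeff 1 + 2 * f.coeff 0 + h.coeff 0 := by
    simp [add_mul, coeff_X_mul, coeff_X_pow_mul']
    ring
  have c₂ (i : ℕ) : (derivative (X + X ^ 2) * f + (X + X ^ 2) * h).coeff (i + 2) =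
      f.coeff (i + 2) + 2 * f.coeff (i + 1) + h.coeff (i + 1) + h.coeff i := by
    simp [add_mul, coeff_X_mul, coeff_X_pow_mul']
    ring
  have c₃ (i : ℕ) : (X ^ (p * 2) * f + X ^ (p * 2 + 1) * h).coeff (i + 1 + p * 2) =
      f.coeff (i + 1) + h.coeff i := by
    simp [coeff_X_pow_mul', show i + 1 + p * 2 - (p * 2 + 1) = i by omega]
  have key (j : ℕ) (hj : j < 6 * p + 1) := eq_zero_of_coeff_relations hp ha₀ h₀
    (coeff_two_eq_coeff_one_of_mem_V19 (by omega) H₁) (fun j => coeff_eq_zero_of_mem_V19 H₁)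
    ((c₂ 0).symm.trans ((coeff_two_eq_coeff_one_of_mem_V19 (by omega) H₂).trans c₁))
    (fun i _ hi hip => (c₂ i).symm.trans (coeff_eq_zero_of_mem_V19 H₂ (by omega) hi hip))
    (fun i _ _ => (c₃ i).symm.trans (coeff_eq_zero_of_mem_V19 H₃ (by omega) (by omega) (by omega)))
    hj
  exact ⟨X_pow_dvd_iff.mpr fun j hj => (key j hj).1, X_pow_dvd_iff.mpr fun j hj => (key j hj).2⟩

end V19

/-- in characteristic `p > 0`, every derivation of
`A = T/I(6p+1; 6p+1, 6p+1; span{1, β+β², β^{2p+1}} + (β^{6p+1}))` is inner. -/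
theorem stmt19 (p : ℕ) [CharP k p] (hp : 0 < p) :
    ∀ D : Aquot k (6 * p + 1) (6 * p + 1) (6 * p + 1) (V19 k p) le_rfl le_rfl (hV19 k p) →ₗ[k]
        Aquot k (6 * p + 1) (6 * p + 1) (6 * p + 1) (V19 k p) le_rfl le_rfl (hV19 k p),
      IsDer k D → IsInner k D := by
  intro D hD
  have : NeZero p := ⟨hp.ne'⟩
  have hp₂ : 2 ≤ p := (CharP.char_is_prime_of_pos k p).out.two_le
  exact isInner_of_forall_derivative_mul_add_mul_mem
    (fun _ _ h₀ H => X_pow_dvd_of_forall_derivative_mul_add_mul_mem_V19 hp₂ h₀ H) hD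

end
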